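/- arXiv:2605.01656 — 2 statements merged into one kernel-verified Lean document; each statement's English description precedes it below -/
import Mathlib

section
/- Let N ≥ 1 and let A, α : Fin N → Fin N → ℝ with A symmetric (A m n = A n m) and α antisymmetric (α m n = −α n m). Fix i : Fin N and define F : (Fin N → ℝ) → ℝ by F θ = Σ_{m} Σ_{n} A m n * Real.cos (θ n − θ m − α m n). Then F is differentiable, and its partial derivative in the i-th coordinate direction satisfies, for every θ : Fin N → ℝ: (∂F/∂θ_i)(θ) = 2 * Σ_{j} A i j * Real.sin (θ j − θ i − α i j). -/
/-- Partial derivative of the interaction part of the Sakaguchi–Kuramoto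
potential: with symmetric coupling `A` and antisymmetric phase lags `α`, the
function `F θ = Σ_m Σ_n A m n * cos (θ n − θ m − α m n)` is differentiable and
`∂F/∂θ_i (θ) = 2 Σ_j A i j * sin (θ j − θ i − α i j)`. -/
theorem interaction_partial_deriv (N : ℕ) (hN : 1 ≤ N)
    (A α : Fin N → Fin N → ℝ)
    (hA : ∀ m n, A m n = A n m) (hα : ∀ m n, α m n = -α n m)
    (i : Fin N) (F : (Fin N → ℝ) → ℝ)
    (hF : F = fun θ => ∑ m, ∑ n, A m n * Real.cos (θ n - θ m - α m n)) :
    Differentiable ℝ F ∧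
      ∀ θ : Fin N → ℝ,
        deriv (fun t : ℝ => F (θ + t • (Pi.single i 1 : Fin N → ℝ))) 0
          = 2 * ∑ j, A i j * Real.sin (θ j - θ i - α i j) := by
  subst hF
  constructor
  · fun_prop
  · intro θ
    set e : Fin N → ℝ := Pi.single i 1 with he
    have key : ∀ m n : Fin N,
        HasDerivAt (fun t : ℝ => A m n * Real.cos ((θ + t • e) n - (θ + t • e) m - α m n))
          (A m n * (-Real.sin (θ n - θ m - α m n) * (e n - e m))) 0 := by
      intro m n
      have h1 : HasDerivAt (fun t : ℝ => (θ + t • e) n - (θ + t • e) m - α m n)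
          (e n - e m) 0 := by
        simp only [Pi.add_apply, Pi.smul_apply, smul_eq_mul]
        simpa using ((((hasDerivAt_id (0:ℝ)).mul_const (e n)).const_add (θ n)).sub
          (((hasDerivAt_id (0:ℝ)).mul_const (e m)).const_add (θ m))).sub_const (α m n)
      have h2 := (h1.cos).const_mul (A m n)
      simpa [mul_assoc] using h2
    have hsum : HasDerivAt
        (fun t : ℝ => ∑ m, ∑ n, A m n * Real.cos ((θ + t • e) n - (θ + t • e) m - α m n))
        (∑ m, ∑ n, A m n * (-Real.sin (θ n - θ m - α m n) * (e n - e m))) 0 := by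
      apply HasDerivAt.fun_sum
      intro m _
      exact HasDerivAt.fun_sum fun n _ => key m n
    rw [hsum.deriv]
    have hsingle : ∀ g : Fin N → ℝ, ∑ n, g n * e n = g i := by
      intro g
      simp [he, Pi.single_apply, mul_ite]
    have split : (∑ m, ∑ n, A m n * (-Real.sin (θ n - θ m - α m n) * (e n - e m)))
        = (∑ m, (A m i * -Real.sin (θ i - θ m - α m i)))
          - ∑ n, (A i n * -Real.sin (θ n - θ i - α i n)) := by
      have : ∀ m : Fin N, ∑ n, A m n * (-Real.sin (θ n - θ m - α m n) * (e n - e m))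
          = (A m i * -Real.sin (θ i - θ m - α m i))
            - (∑ n, A m n * -Real.sin (θ n - θ m - α m n)) * e m := by
        intro m
        rw [← hsingle (fun n => A m n * -Real.sin (θ n - θ m - α m n)),
          Finset.sum_mul, ← Finset.sum_sub_distrib]
        congr 1; funext n; ring
      rw [Finset.sum_congr rfl fun m _ => this m, Finset.sum_sub_distrib]
      congr 1
      rw [← hsingle (fun m => (∑ n, A m n * -Real.sin (θ n - θ m - α m n)))]
    rw [split]
    have h1 : ∀ m : Fin N, A m i * -Real.sin (θ i - θ m - α m i)
        = A i m * Real.sin (θ m - θ i - α i m) := by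
      intro m
      rw [hA m i, hα m i]
      have : θ i - θ m - -α i m = -(θ m - θ i - α i m) := by ring
      rw [this, Real.sin_neg]
      ring
    rw [Finset.sum_congr rfl fun m _ => h1 m, Finset.mul_sum, ← Finset.sum_sub_distrib]
    congr 1; funext n; ring
end

section
/- Let N ≥ 1, D ≥ 1, K ∈ ℝ, and let A, α : Fin N → Fin N → ℝ with A symmetric (A m n = A n m) and α antisymmetric (α m n = −α n m). Let κ : Fin N → Fin D → ℝ and γ : Fin N → ℝ. Define the potential V : (Fin N → Fin D → ℝ) → ℝ by V θ = −(K/(2N)) * Σ_{d} Σ_{m} Σ_{n} A m n * Real.cos (θ n d − θ m d − α m n) − Σ_{d} Σ_{m} κ m d * Real.cos (γ m − θ m d). Then V is differentiable and, for every θ, every i : Fin N and every d : Fin D, the partial derivative of V in the (i,d)-coordinate direction satisfies −(∂V/∂θ_{i,d})(θ) = κ i d * Real.sin (γ i − θ i d) + (K/N) * Σ_{j} A i j * Real.sin (θ j d − θ i d − α i j). -/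
/-- Partial derivative of a function of the phase state `θ : Fin N → Fin D → ℝ`
in the `(i,d)`-coordinate direction: the derivative at `0` of
`t ↦ V (θ + t • E_{i,d})`, where `E_{i,d}` is the standard basis element. -/
noncomputable def partialDeriv' {N D : ℕ}
    (V : (Fin N → Fin D → ℝ) → ℝ) (θ : Fin N → Fin D → ℝ)
    (i : Fin N) (d : Fin D) : ℝ :=
  deriv (fun t : ℝ => V (θ + t • (Pi.single i (Pi.single d 1) : Fin N → Fin D → ℝ))) 0

/-- Under symmetric structural coupling `A` and antisymmetric phase lags `α`,
the interaction and sensory-drive components of the Sakaguchi–Kuramoto update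
rule follow the negative gradient of the potential `V`. -/
theorem kuramoto_neg_gradient (N D : ℕ) (hN : 1 ≤ N) (hD : 1 ≤ D) (K : ℝ)
    (A α : Fin N → Fin N → ℝ)
    (hA : ∀ m n, A m n = A n m) (hα : ∀ m n, α m n = -α n m)
    (κ : Fin N → Fin D → ℝ) (γ : Fin N → ℝ)
    (V : (Fin N → Fin D → ℝ) → ℝ)
    (hV : V = fun θ =>
        -(K / (2 * N)) * ∑ d, ∑ m, ∑ n, A m n * Real.cos (θ n d - θ m d - α m n)
          - ∑ d, ∑ m, κ m d * Real.cos (γ m - θ m d)) :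
    Differentiable ℝ V ∧
      ∀ (θ : Fin N → Fin D → ℝ) (i : Fin N) (d : Fin D),
        -partialDeriv' V θ i d
          = κ i d * Real.sin (γ i - θ i d)
            + (K / N) * ∑ j, A i j * Real.sin (θ j d - θ i d - α i j) := by
  subst hV
  refine ⟨by fun_prop, ?_⟩
  intro θ i d
  set E : Fin N → Fin D → ℝ := Pi.single i (Pi.single d 1) with hEdef
  -- derivative of each cosine term
  have h1 : ∀ (d' : Fin D) (m n : Fin N), HasDerivAt
      (fun t : ℝ => Real.cos ((θ + t • E) n d' - (θ + t • E) m d' - α m n))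
      (-Real.sin (θ n d' - θ m d' - α m n) * (E n d' - E m d')) 0 := by
    intro d' m n
    have hu : HasDerivAt (fun t : ℝ => (θ + t • E) n d' - (θ + t • E) m d' - α m n)
        (E n d' - E m d') 0 := by
      simp only [Pi.add_apply, Pi.smul_apply, smul_eq_mul]
      simpa using ((((hasDerivAt_id (0:ℝ)).mul_const (E n d')).const_add (θ n d')).sub
        (((hasDerivAt_id (0:ℝ)).mul_const (E m d')).const_add (θ m d'))).sub_const (α m n)
    simpa using hu.cos
  have h2 : ∀ (d' : Fin D) (m : Fin N), HasDerivAt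
      (fun t : ℝ => Real.cos (γ m - (θ + t • E) m d'))
      (-Real.sin (γ m - θ m d') * -(E m d')) 0 := by
    intro d' m
    have hu : HasDerivAt (fun t : ℝ => γ m - (θ + t • E) m d') (-(E m d')) 0 := by
      simp only [Pi.add_apply, Pi.smul_apply, smul_eq_mul]
      simpa using (((hasDerivAt_id (0:ℝ)).mul_const (E m d')).const_add (θ m d')).const_sub (γ m)
    simpa using hu.cos
  have key : HasDerivAt
      (fun t : ℝ =>
        -(K / (2 * N)) * ∑ d', ∑ m, ∑ n, A m n *
            Real.cos ((θ + t • E) n d' - (θ + t • E) m d' - α m n)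
          - ∑ d', ∑ m, κ m d' * Real.cos (γ m - (θ + t • E) m d'))
      (-(K / (2 * N)) * ∑ d', ∑ m, ∑ n, A m n *
          (-Real.sin (θ n d' - θ m d' - α m n) * (E n d' - E m d'))
        - ∑ d', ∑ m, κ m d' * (-Real.sin (γ m - θ m d') * -(E m d'))) 0 :=
    ((HasDerivAt.fun_sum fun d' _ => HasDerivAt.fun_sum fun m _ => HasDerivAt.fun_sum fun n _ =>
        (h1 d' m n).const_mul (A m n)).const_mul (-(K / (2 * N)))).sub
      (HasDerivAt.fun_sum fun d' _ => HasDerivAt.fun_sum fun m _ => (h2 d' m).const_mul (κ m d'))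
  have hpd : partialDeriv' (fun θ : Fin N → Fin D → ℝ =>
        -(K / (2 * N)) * ∑ d, ∑ m, ∑ n, A m n * Real.cos (θ n d - θ m d - α m n)
          - ∑ d, ∑ m, κ m d * Real.cos (γ m - θ m d)) θ i d
      = -(K / (2 * N)) * ∑ d', ∑ m, ∑ n, A m n *
          (-Real.sin (θ n d' - θ m d' - α m n) * (E n d' - E m d'))
        - ∑ d', ∑ m, κ m d' * (-Real.sin (γ m - θ m d') * -(E m d')) := by
    unfold partialDeriv'
    rw [← hEdef]
    exact key.deriv
  rw [hpd]
  -- now the algebraic simplification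
  have he : ∀ (n : Fin N) (d' : Fin D),
      E n d' = if n = i then (if d' = d then 1 else 0) else 0 := by
    intro n d'
    simp [hEdef, Pi.single_apply, ite_apply]
  simp only [he, mul_sub, Finset.sum_sub_distrib, mul_ite, mul_one, mul_zero, mul_neg,
    neg_neg, Finset.sum_ite_eq', Finset.mem_univ, if_true, Finset.sum_ite_irrel,
    Finset.sum_const_zero]
  have hswap : ∀ x : Fin N, A x i * Real.sin (θ i d - θ x d - α x i)
      = -(A i x * Real.sin (θ x d - θ i d - α i x)) := by
    intro x
    rw [hA x i, hα x i, show θ i d - θ x d - -α i x = -(θ x d - θ i d - α i x) by ring,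
      Real.sin_neg]
    ring
  simp only [hswap, apply_ite (fun x : ℝ => -x), neg_zero, neg_neg,
    Finset.sum_ite_eq', Finset.mem_univ, if_true, Finset.sum_neg_distrib]
  have hNne : (N : ℝ) ≠ 0 := Nat.cast_ne_zero.mpr (by omega)
  field_simp
  ring
end
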